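/- arXiv:2011.03447 — 2 statements merged into one kernel-verified Lean document; each statement's English description precedes it below -/
import Mathlib

section
/- Under assumption (SH), the map A ↦ p_A(·) is continuous from (𝒜, ‖·‖₂) to (C([s,T];ℝⁿ), ‖·‖_∞), where for each A ∈ 𝒜 the multiplier p_A is the unique solution of the backward system −ṗ_A(t) = Aᵀ p_A(t) − Q x̄_A(t) on [s,T] with −p_A(T) = Q_f x̄_A(T) and {x̄_A : A ∈ 𝒜} are the optimal trajectories of the averaged LQ problem. -/
open MeasureTheory Set Matrix Filter Topology

noncomputable instance matMS {k l : ℕ} : MeasurableSpace (Matrix (Fin k) (Fin l) ℝ) := borel _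
instance matBS {k l : ℕ} : BorelSpace (Matrix (Fin k) (Fin l) ℝ) := ⟨rfl⟩

/-- The matrix 2-norm (operator norm w.r.t. Euclidean norms). -/
noncomputable def opN {k l : ℕ} (M : Matrix (Fin k) (Fin l) ℝ) : ℝ :=
  ‖LinearMap.toContinuousLinearMap (Matrix.toEuclideanLin M)‖

/-- Application of a matrix to a Euclidean vector. -/
noncomputable def app {k l : ℕ} (M : Matrix (Fin k) (Fin l) ℝ)
    (v : EuclideanSpace ℝ (Fin l)) : EuclideanSpace ℝ (Fin k) :=
  Matrix.toEuclideanLin M v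

/-- `x` is the solution on `[s,T]` of `ẋ = A x + B u`, `x(s) = x₀` (in integral form). -/
noncomputable def IsTraj {n m : ℕ} (B : Matrix (Fin n) (Fin m) ℝ) (s T : ℝ)
    (x₀ : EuclideanSpace ℝ (Fin n)) (A : Matrix (Fin n) (Fin n) ℝ)
    (u : ℝ → EuclideanSpace ℝ (Fin m)) (x : ℝ → EuclideanSpace ℝ (Fin n)) : Prop :=
  ContinuousOn x (Set.Icc s T) ∧
  ∀ t ∈ Set.Icc s T, x t = x₀ + ∫ τ in s..t, (app A (x τ) + app B (u τ))

/-- The LQ cost `½∫ₛᵀ (xᵀQx + uᵀRu) dt + ½ x(T)ᵀ Q_f x(T)` of a trajectory/control pair. -/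
noncomputable def cost {n m : ℕ} (Q Qf : Matrix (Fin n) (Fin n) ℝ) (R : Matrix (Fin m) (Fin m) ℝ)
    (s T : ℝ) (x : ℝ → EuclideanSpace ℝ (Fin n)) (u : ℝ → EuclideanSpace ℝ (Fin m)) : ℝ :=
  (1/2) * (∫ t in s..T, ((inner ℝ (x t) (app Q (x t)) : ℝ) + (inner ℝ (u t) (app R (u t)) : ℝ)))
    + (1/2) * (inner ℝ (x T) (app Qf (x T)) : ℝ)

/-- An admissible process for the averaged problem: an integrable (and square-integrable)
control together with the corresponding family of trajectories, one for each `A ∈ 𝒜`. -/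
noncomputable def Adm {n m : ℕ} (B : Matrix (Fin n) (Fin m) ℝ)
    (𝒜 : Set (Matrix (Fin n) (Fin n) ℝ)) (s T : ℝ) (x₀ : EuclideanSpace ℝ (Fin n))
    (u : ℝ → EuclideanSpace ℝ (Fin m))
    (x : Matrix (Fin n) (Fin n) ℝ → ℝ → EuclideanSpace ℝ (Fin n)) : Prop :=
  MeasureTheory.IntegrableOn u (Set.Icc s T) ∧
  MeasureTheory.IntegrableOn (fun t => ‖u t‖ ^ 2) (Set.Icc s T) ∧
  ∀ A ∈ 𝒜, IsTraj B s T x₀ A u (x A)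

/-- The averaged cost `J_{s,π}[u] = ∫_𝒜 cost(x_A, u) dπ(A)`. -/
noncomputable def Jcost {n m : ℕ} (Q Qf : Matrix (Fin n) (Fin n) ℝ)
    (R : Matrix (Fin m) (Fin m) ℝ) (s T : ℝ) (π : Measure (Matrix (Fin n) (Fin n) ℝ))
    (u : ℝ → EuclideanSpace ℝ (Fin m))
    (x : Matrix (Fin n) (Fin n) ℝ → ℝ → EuclideanSpace ℝ (Fin n)) : ℝ :=
  ∫ A, cost Q Qf R s T (x A) u ∂π

/-- The value function `V_π(s,x₀)` of the averaged problem. -/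
noncomputable def Val {n m : ℕ} (Q Qf : Matrix (Fin n) (Fin n) ℝ)
    (R : Matrix (Fin m) (Fin m) ℝ) (B : Matrix (Fin n) (Fin m) ℝ)
    (𝒜 : Set (Matrix (Fin n) (Fin n) ℝ)) (T : ℝ) (π : Measure (Matrix (Fin n) (Fin n) ℝ))
    (s : ℝ) (x₀ : EuclideanSpace ℝ (Fin n)) : ℝ :=
  sInf {c | ∃ u x, Adm B 𝒜 s T x₀ u x ∧ c = Jcost Q Qf R s T π u x}

/-- Wasserstein-1 distance between measures on the matrix space, induced by the 2-norm. -/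
noncomputable def W1 {k : ℕ} (π π' : Measure (Matrix (Fin k) (Fin k) ℝ)) : ℝ :=
  sInf {r | ∃ γ : Measure (Matrix (Fin k) (Fin k) ℝ × Matrix (Fin k) (Fin k) ℝ),
    γ.map Prod.fst = π ∧ γ.map Prod.snd = π' ∧ r = ∫ p, opN (p.1 - p.2) ∂γ}

/-- Support of a measure. -/
def msupport {α : Type*} [TopologicalSpace α] [MeasurableSpace α]
    (π : Measure α) : Set α :=
  {A | ∀ U : Set α, IsOpen U → A ∈ U → 0 < π U}

/-- `pA` is the (unique) solution of the backward adjoint system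
`−ṗ_A(t) = Aᵀ p_A(t) − Q x̄_A(t)` on `[s,T]` with `−p_A(T) = Q_f x̄_A(T)`,
written in integral form. -/
noncomputable def IsAdjoint {n : ℕ} (Q Qf : Matrix (Fin n) (Fin n) ℝ) (s T : ℝ)
    (A : Matrix (Fin n) (Fin n) ℝ) (xbarA : ℝ → EuclideanSpace ℝ (Fin n))
    (pA : ℝ → EuclideanSpace ℝ (Fin n)) : Prop :=
  ContinuousOn pA (Set.Icc s T) ∧
  ∀ t ∈ Set.Icc s T,
    pA t = -(app Qf (xbarA T)) + ∫ τ in t..T, (app Aᵀ (pA τ) - app Q (xbarA τ))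

/-!
All trajectories `x̄_A` are driven by the same control `ū`, so Grönwall's inequality bounds them
uniformly for `‖A‖₂ ≤ C_𝒜`; since `x̄_A - x̄_{A'}` solves a linear equation with source
`(A - A') x̄_{A'}`, it also gives `‖x̄_A - x̄_{A'}‖_∞ ≤ L ‖A - A'‖₂`. The adjoint equation is linear
in `(p_A, x̄_A)` with coefficient `Aᵀ`, and `‖Aᵀ‖₂ = ‖A‖₂`; the same estimates run backward in
time give a uniform bound on `p_A` and then `‖p_A - p_{A'}‖_∞ ≤ K ‖A - A'‖₂`.
-/

theorem le_mul_exp_of_le_add_mul_integral {f : ℝ → ℝ} {a b c K : ℝ} (hK : 0 ≤ K)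
    (hf : ContinuousOn f (Icc a b)) (h : ∀ t ∈ Icc a b, f t ≤ c + K * ∫ τ in a..t, f τ) :
    ∀ t ∈ Icc a b, f t ≤ c * Real.exp (K * (t - a)) := by
  intro t ht
  have hab : a ≤ b := ht.1.trans ht.2
  have hfi : IntervalIntegrable f volume a b := hf.intervalIntegrable_of_Icc hab
  -- `g` is differentiable with `g' = K f ≤ K g` and `g a = c`, so the differential Grönwall
  -- inequality applies to `g ≥ f`.
  set g : ℝ → ℝ := fun t => c + K * ∫ τ in a..t, f τ
  have hg : ContinuousOn g (Icc a b) := by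
    have := intervalIntegral.continuousOn_primitive_interval' hfi left_mem_uIcc
    rw [uIcc_of_le hab] at this
    exact continuousOn_const.add (continuousOn_const.mul this)
  have hg' : ∀ x ∈ Ico a b, HasDerivWithinAt g (K * f x) (Ici x) x := by
    intro x hx
    have hIcc : Icc a b ∈ 𝓝[>] x :=
      mem_nhdsWithin.2 ⟨Iio b, isOpen_Iio, hx.2, fun y hy => ⟨hx.1.trans hy.2.le, hy.1.le⟩⟩
    have hprim : HasDerivWithinAt (fun u => ∫ τ in a..u, f τ) (f x) (Ici x) x :=
      intervalIntegral.integral_hasDerivWithinAt_right (t := Ioi x)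
        ((hf.mono (Icc_subset_Icc_right hx.2.le)).intervalIntegrable_of_Icc hx.1)
        ⟨Icc a b, hIcc, hf.aestronglyMeasurable measurableSet_Icc⟩
        ((hf x (Ico_subset_Icc_self hx)).mono_of_mem_nhdsWithin hIcc)
    exact (hprim.const_mul K).const_add c
  have hgron := le_gronwallBound_of_liminf_deriv_right_le (δ := c) (K := K) (ε := 0) hg
    (fun x hx _ hr => (hg' x hx).liminf_right_slope_le hr) (by simp [g])
    (fun x hx => by simpa using mul_le_mul_of_nonneg_left (h x (Ico_subset_Icc_self hx)) hK) t ht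
  rw [gronwallBound_ε0] at hgron
  exact (h t ht).trans hgron

section IntegralEquations

variable {E : Type*} [NormedAddCommGroup E] [NormedSpace ℝ E]

theorem norm_le_of_eq_add_integral {y F : ℝ → E} {h : ℝ → ℝ} {y₀ : E} {s T C : ℝ} (hC : 0 ≤ C)
    (hy : ContinuousOn y (Icc s T)) (hF : IntervalIntegrable F volume s T)
    (hh : IntervalIntegrable h volume s T) (hh0 : ∀ τ ∈ Icc s T, 0 ≤ h τ)
    (hFy : ∀ τ ∈ Icc s T, ‖F τ‖ ≤ C * ‖y τ‖ + h τ)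
    (hyF : ∀ t ∈ Icc s T, y t = y₀ + ∫ τ in s..t, F τ) :
    ∀ t ∈ Icc s T, ‖y t‖ ≤ (‖y₀‖ + ∫ τ in s..T, h τ) * Real.exp (C * (T - s)) := by
  have hint : ∀ t ∈ Icc s T, ‖y t‖ ≤ (‖y₀‖ + ∫ τ in s..T, h τ) + C * ∫ τ in s..t, ‖y τ‖ := by
    intro t ht
    have hsub : uIcc s t ⊆ uIcc s T :=
      uIcc_subset_uIcc_left (Icc_subset_uIcc ht)
    have hyi : IntervalIntegrable (fun τ => ‖y τ‖) volume s t :=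
      (hy.norm.mono (Icc_subset_Icc_right ht.2)).intervalIntegrable_of_Icc ht.1
    have hhi : IntervalIntegrable h volume s t := hh.mono_set hsub
    calc ‖y t‖ ≤ ‖y₀‖ + ∫ τ in s..t, ‖F τ‖ := by
          rw [hyF t ht]
          exact (norm_add_le _ _).trans
            (add_le_add_right (intervalIntegral.norm_integral_le_integral_norm ht.1) _)
      _ ≤ ‖y₀‖ + ∫ τ in s..t, (C * ‖y τ‖ + h τ) := by
          gcongr
          exact intervalIntegral.integral_mono_on ht.1 (hF.mono_set hsub).norm
            ((hyi.const_mul C).add hhi) fun τ hτ => hFy τ ⟨hτ.1, hτ.2.trans ht.2⟩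
      _ = ‖y₀‖ + (∫ τ in s..t, h τ) + C * ∫ τ in s..t, ‖y τ‖ := by
          rw [intervalIntegral.integral_add (hyi.const_mul C) hhi,
            intervalIntegral.integral_const_mul]
          ring
      _ ≤ (‖y₀‖ + ∫ τ in s..T, h τ) + C * ∫ τ in s..t, ‖y τ‖ := by
          gcongr
          exact intervalIntegral.integral_mono_interval le_rfl ht.1 ht.2
            ((ae_restrict_mem measurableSet_Ioc).mono fun τ hτ => hh0 τ (Ioc_subset_Icc_self hτ))
            hh
  intro t ht
  have hc : 0 ≤ ‖y₀‖ + ∫ τ in s..T, h τ :=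
    add_nonneg (norm_nonneg _) (intervalIntegral.integral_nonneg (ht.1.trans ht.2) hh0)
  calc ‖y t‖ ≤ (‖y₀‖ + ∫ τ in s..T, h τ) * Real.exp (C * (t - s)) :=
        le_mul_exp_of_le_add_mul_integral hC hy.norm hint t ht
    _ ≤ (‖y₀‖ + ∫ τ in s..T, h τ) * Real.exp (C * (T - s)) := by gcongr; exact ht.2

theorem norm_le_of_eq_add_integral_right {y F : ℝ → E} {h : ℝ → ℝ} {y₁ : E} {s T C : ℝ}
    (hC : 0 ≤ C) (hy : ContinuousOn y (Icc s T)) (hF : IntervalIntegrable F volume s T)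
    (hh : IntervalIntegrable h volume s T) (hh0 : ∀ τ ∈ Icc s T, 0 ≤ h τ)
    (hFy : ∀ τ ∈ Icc s T, ‖F τ‖ ≤ C * ‖y τ‖ + h τ)
    (hyF : ∀ t ∈ Icc s T, y t = y₁ + ∫ τ in t..T, F τ) :
    ∀ t ∈ Icc s T, ‖y t‖ ≤ (‖y₁‖ + ∫ τ in s..T, h τ) * Real.exp (C * (T - s)) := by
  have hrefl : MapsTo (fun t => s + T - t) (Icc s T) (Icc s T) :=
    fun t ht => ⟨by linarith [ht.2], by linarith [ht.1]⟩
  have hreflected := norm_le_of_eq_add_integral (y := fun t => y (s + T - t))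
    (F := fun t => F (s + T - t)) (h := fun t => h (s + T - t)) (y₀ := y₁) hC
    (hy.comp (continuous_const.sub continuous_id).continuousOn hrefl)
    (by simpa using (hF.comp_sub_left (s + T)).symm)
    (by simpa using (hh.comp_sub_left (s + T)).symm)
    (fun τ hτ => hh0 _ (hrefl hτ)) (fun τ hτ => hFy _ (hrefl hτ))
    (fun t ht => by simp [hyF _ (hrefl ht), intervalIntegral.integral_comp_sub_left])
  intro t ht
  simpa [intervalIntegral.integral_comp_sub_left] using hreflected (s + T - t) (hrefl ht)

end IntegralEquations

section Matrices

variable {k l : ℕ}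

theorem opN_nonneg (M : Matrix (Fin k) (Fin l) ℝ) : 0 ≤ opN M := norm_nonneg _

theorem norm_app_le (M : Matrix (Fin k) (Fin l) ℝ) (v : EuclideanSpace ℝ (Fin l)) :
    ‖app M v‖ ≤ opN M * ‖v‖ :=
  (LinearMap.toContinuousLinearMap (toEuclideanLin M)).le_opNorm v

theorem continuous_app (M : Matrix (Fin k) (Fin l) ℝ) : Continuous (app M) :=
  LinearMap.continuous_of_finiteDimensional _

theorem app_sub (M : Matrix (Fin k) (Fin l) ℝ) (v w : EuclideanSpace ℝ (Fin l)) :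
    app M (v - w) = app M v - app M w :=
  map_sub _ _ _

theorem sub_app (M M' : Matrix (Fin k) (Fin l) ℝ) (v : EuclideanSpace ℝ (Fin l)) :
    app (M - M') v = app M v - app M' v := by
  simp only [app, map_sub, LinearMap.sub_apply]

theorem opN_transpose (M : Matrix (Fin k) (Fin k) ℝ) : opN Mᵀ = opN M := by
  rw [opN, ← conjTranspose_eq_transpose_of_trivial, toEuclideanLin_conjTranspose_eq_adjoint,
    LinearMap.adjoint_toContinuousLinearMap, LinearIsometryEquiv.norm_map, opN]

theorem norm_app_sub_app_le (M M' : Matrix (Fin k) (Fin l) ℝ) (v v' : EuclideanSpace ℝ (Fin l)) :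
    ‖app M v - app M' v'‖ ≤ opN M * ‖v - v'‖ + opN (M - M') * ‖v'‖ := by
  have : app M v - app M' v' = app M (v - v') + app (M - M') v' := by
    rw [app_sub, sub_app]; abel
  rw [this]
  exact (norm_add_le _ _).trans (add_le_add (norm_app_le _ _) (norm_app_le _ _))

end Matrices

section Estimates

variable {n m : ℕ} {s T C M : ℝ} {B : Matrix (Fin n) (Fin m) ℝ} {x₀ : EuclideanSpace ℝ (Fin n)}
  {A A' Q Qf : Matrix (Fin n) (Fin n) ℝ} {u : ℝ → EuclideanSpace ℝ (Fin m)}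
  {x x' p p' : ℝ → EuclideanSpace ℝ (Fin n)}

theorem intervalIntegrable_app_comp (hsT : s ≤ T) (hu : IntegrableOn u (Icc s T)) :
    IntervalIntegrable (fun τ => app B (u τ)) volume s T :=
  (intervalIntegrable_iff_integrableOn_Icc_of_le hsT).2
    ((LinearMap.toContinuousLinearMap (toEuclideanLin B)).integrable_comp hu)

theorem IsTraj.intervalIntegrable_integrand (hsT : s ≤ T) (hu : IntegrableOn u (Icc s T))
    (hx : IsTraj B s T x₀ A u x) :
    IntervalIntegrable (fun τ => app A (x τ) + app B (u τ)) volume s T :=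
  (((continuous_app A).comp_continuousOn hx.1).intervalIntegrable_of_Icc hsT).add
    (intervalIntegrable_app_comp hsT hu)

theorem IsTraj.norm_le (hsT : s ≤ T) (hA : opN A ≤ C) (hu : IntegrableOn u (Icc s T))
    (hx : IsTraj B s T x₀ A u x) :
    ∀ t ∈ Icc s T, ‖x t‖ ≤ (‖x₀‖ + ∫ τ in s..T, ‖app B (u τ)‖) * Real.exp (C * (T - s)) :=
  norm_le_of_eq_add_integral ((opN_nonneg A).trans hA) hx.1
    (hx.intervalIntegrable_integrand hsT hu)
    (intervalIntegrable_app_comp hsT hu).norm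
    (fun _ _ => norm_nonneg _)
    (fun τ _ => (norm_add_le _ _).trans (add_le_add
      ((norm_app_le A (x τ)).trans (mul_le_mul_of_nonneg_right hA (norm_nonneg _))) le_rfl))
    hx.2

theorem IsTraj.norm_sub_le (hsT : s ≤ T) (hA : opN A ≤ C) (hu : IntegrableOn u (Icc s T))
    (hx : IsTraj B s T x₀ A u x) (hx' : IsTraj B s T x₀ A' u x')
    (hM : ∀ t ∈ Icc s T, ‖x' t‖ ≤ M) :
    ∀ t ∈ Icc s T, ‖x t - x' t‖ ≤ opN (A - A') * M * (T - s) * Real.exp (C * (T - s)) := by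
  have hdiff : ∀ t ∈ Icc s T,
      x t - x' t = 0 + ∫ τ in s..t, (app A (x τ) - app A' (x' τ)) := by
    intro t ht
    have hsub : uIcc s t ⊆ uIcc s T := uIcc_subset_uIcc_left (Icc_subset_uIcc ht)
    rw [hx.2 t ht, hx'.2 t ht, zero_add, add_sub_add_left_eq_sub,
      ← intervalIntegral.integral_sub
        ((hx.intervalIntegrable_integrand hsT hu).mono_set hsub)
        ((hx'.intervalIntegrable_integrand hsT hu).mono_set hsub)]
    simp only [add_sub_add_right_eq_sub]
  have hbound := norm_le_of_eq_add_integral (y := fun t => x t - x' t)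
    (h := fun _ => opN (A - A') * M) ((opN_nonneg A).trans hA) (hx.1.sub hx'.1)
    ((((continuous_app A).comp_continuousOn hx.1).sub
      ((continuous_app A').comp_continuousOn hx'.1)).intervalIntegrable_of_Icc hsT)
    intervalIntegrable_const
    (fun τ hτ => mul_nonneg (opN_nonneg _) ((norm_nonneg _).trans (hM τ hτ)))
    (fun τ hτ => (norm_app_sub_app_le A A' (x τ) (x' τ)).trans
      (add_le_add (mul_le_mul_of_nonneg_right hA (norm_nonneg _))
        (mul_le_mul_of_nonneg_left (hM τ hτ) (opN_nonneg _))))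
    hdiff
  intro t ht
  refine (hbound t ht).trans_eq ?_
  simp only [norm_zero, zero_add, intervalIntegral.integral_const, smul_eq_mul]
  ring

theorem IsAdjoint.continuousOn_integrand (hxc : ContinuousOn x (Icc s T))
    (hp : IsAdjoint Q Qf s T A x p) :
    ContinuousOn (fun τ => app Aᵀ (p τ) - app Q (x τ)) (Icc s T) :=
  ((continuous_app _).comp_continuousOn hp.1).sub ((continuous_app Q).comp_continuousOn hxc)

theorem IsAdjoint.norm_le (hsT : s ≤ T) (hA : opN A ≤ C) (hxc : ContinuousOn x (Icc s T))
    (hM : ∀ t ∈ Icc s T, ‖x t‖ ≤ M) (hp : IsAdjoint Q Qf s T A x p) :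
    ∀ t ∈ Icc s T, ‖p t‖ ≤ (opN Qf * M + opN Q * M * (T - s)) * Real.exp (C * (T - s)) := by
  have hbound := norm_le_of_eq_add_integral_right (h := fun _ => opN Q * M)
    ((opN_nonneg A).trans hA) hp.1 ((hp.continuousOn_integrand hxc).intervalIntegrable_of_Icc hsT)
    intervalIntegrable_const
    (fun τ hτ => mul_nonneg (opN_nonneg _) ((norm_nonneg _).trans (hM τ hτ)))
    (fun τ hτ => (norm_sub_le _ _).trans (add_le_add
      ((norm_app_le _ _).trans (by rw [opN_transpose]; gcongr))
      ((norm_app_le _ _).trans (mul_le_mul_of_nonneg_left (hM τ hτ) (opN_nonneg _)))))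
    hp.2
  intro t ht
  refine (hbound t ht).trans ?_
  rw [intervalIntegral.integral_const, smul_eq_mul, norm_neg, mul_comm (T - s)]
  gcongr
  exact (norm_app_le _ _).trans
    (mul_le_mul_of_nonneg_left (hM T (right_mem_Icc.2 hsT)) (opN_nonneg _))

theorem IsAdjoint.norm_sub_le (hsT : s ≤ T) (hA : opN A ≤ C) (hxc : ContinuousOn x (Icc s T))
    (hxc' : ContinuousOn x' (Icc s T)) {P D : ℝ} (hP : ∀ t ∈ Icc s T, ‖p' t‖ ≤ P)
    (hD : ∀ t ∈ Icc s T, ‖x t - x' t‖ ≤ D)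
    (hp : IsAdjoint Q Qf s T A x p) (hp' : IsAdjoint Q Qf s T A' x' p') :
    ∀ t ∈ Icc s T, ‖p t - p' t‖ ≤
      (opN Qf * D + (opN (A - A') * P + opN Q * D) * (T - s)) * Real.exp (C * (T - s)) := by
  have hdiff : ∀ t ∈ Icc s T, p t - p' t = -app Qf (x T - x' T) +
      ∫ τ in t..T, ((app Aᵀ (p τ) - app Q (x τ)) - (app A'ᵀ (p' τ) - app Q (x' τ))) := by
    intro t ht
    have hsub : Icc t T ⊆ Icc s T := Icc_subset_Icc_left ht.1
    rw [hp.2 t ht, hp'.2 t ht, app_sub, intervalIntegral.integral_sub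
      (((hp.continuousOn_integrand hxc).mono hsub).intervalIntegrable_of_Icc ht.2)
      (((hp'.continuousOn_integrand hxc').mono hsub).intervalIntegrable_of_Icc ht.2)]
    abel
  have hF : ∀ τ ∈ Icc s T,
      ‖(app Aᵀ (p τ) - app Q (x τ)) - (app A'ᵀ (p' τ) - app Q (x' τ))‖ ≤
        C * ‖p τ - p' τ‖ + (opN (A - A') * P + opN Q * D) := by
    intro τ hτ
    have h1 := mul_le_mul_of_nonneg_right hA (norm_nonneg (p τ - p' τ))
    have h2 := mul_le_mul_of_nonneg_left (hP τ hτ) (opN_nonneg (A - A'))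
    have h3 := mul_le_mul_of_nonneg_left (hD τ hτ) (opN_nonneg Q)
    calc ‖(app Aᵀ (p τ) - app Q (x τ)) - (app A'ᵀ (p' τ) - app Q (x' τ))‖
        = ‖(app Aᵀ (p τ) - app A'ᵀ (p' τ)) - app Q (x τ - x' τ)‖ := by
          rw [sub_sub_sub_comm, app_sub]
      _ ≤ opN Aᵀ * ‖p τ - p' τ‖ + opN (Aᵀ - A'ᵀ) * ‖p' τ‖ + opN Q * ‖x τ - x' τ‖ :=
          (_root_.norm_sub_le _ _).trans
            (add_le_add (norm_app_sub_app_le _ _ _ _) (norm_app_le _ _))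
      _ ≤ C * ‖p τ - p' τ‖ + (opN (A - A') * P + opN Q * D) := by
          rw [opN_transpose, ← transpose_sub, opN_transpose]
          linarith
  have hbound := norm_le_of_eq_add_integral_right (y := fun t => p t - p' t)
    (h := fun _ => opN (A - A') * P + opN Q * D)
    ((opN_nonneg A).trans hA) (hp.1.sub hp'.1)
    (((hp.continuousOn_integrand hxc).sub
      (hp'.continuousOn_integrand hxc')).intervalIntegrable_of_Icc hsT)
    intervalIntegrable_const
    (fun τ hτ => add_nonneg (mul_nonneg (opN_nonneg _) ((norm_nonneg _).trans (hP τ hτ)))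
      (mul_nonneg (opN_nonneg _) ((norm_nonneg _).trans (hD τ hτ))))
    hF hdiff
  intro t ht
  refine (hbound t ht).trans ?_
  rw [intervalIntegral.integral_const, smul_eq_mul, norm_neg, mul_comm (T - s)]
  gcongr
  exact (norm_app_le _ _).trans
    (mul_le_mul_of_nonneg_left (hD T (right_mem_Icc.2 hsT)) (opN_nonneg _))

end Estimates

theorem exists_adjoint_lipschitz {n m : ℕ} {s T C : ℝ} {B : Matrix (Fin n) (Fin m) ℝ}
    {x₀ : EuclideanSpace ℝ (Fin n)} {𝒜 : Set (Matrix (Fin n) (Fin n) ℝ)}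
    {Q Qf : Matrix (Fin n) (Fin n) ℝ} {u : ℝ → EuclideanSpace ℝ (Fin m)}
    {x p : Matrix (Fin n) (Fin n) ℝ → ℝ → EuclideanSpace ℝ (Fin n)}
    (hC : ∀ A ∈ 𝒜, opN A ≤ C) (hadm : Adm B 𝒜 s T x₀ u x)
    (hp : ∀ A ∈ 𝒜, IsAdjoint Q Qf s T A (x A) (p A)) :
    ∃ K, ∀ A ∈ 𝒜, ∀ A' ∈ 𝒜, ∀ t ∈ Icc s T, ‖p A t - p A' t‖ ≤ K * opN (A - A') := by
  obtain ⟨hu, -, hx⟩ := hadm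
  set E := Real.exp (C * (T - s))
  set M := (‖x₀‖ + ∫ τ in s..T, ‖app B (u τ)‖) * E
  set P := (opN Qf * M + opN Q * M * (T - s)) * E
  set D := M * (T - s) * E
  refine ⟨(opN Qf * D + (P + opN Q * D) * (T - s)) * E, fun A hA A' hA' t ht => ?_⟩
  have hsT : s ≤ T := ht.1.trans ht.2
  have hM : ∀ A ∈ 𝒜, ∀ τ ∈ Icc s T, ‖x A τ‖ ≤ M :=
    fun A hA => (hx A hA).norm_le hsT (hC A hA) hu
  have hP : ∀ τ ∈ Icc s T, ‖p A' τ‖ ≤ P :=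
    (hp A' hA').norm_le hsT (hC A' hA') (hx A' hA').1 (hM A' hA')
  have hD : ∀ τ ∈ Icc s T, ‖x A τ - x A' τ‖ ≤ opN (A - A') * D := fun τ hτ =>
    ((hx A hA).norm_sub_le hsT (hC A hA) hu (hx A' hA') (hM A' hA') τ hτ).trans_eq (by ring)
  refine ((hp A hA).norm_sub_le hsT (hC A hA) (hx A hA).1 (hx A' hA').1 hP hD (hp A' hA') t
    ht).trans_eq ?_
  ring

theorem stmt_7_general {n m : ℕ} (T : ℝ) (s : ℝ)
    (x₀ : EuclideanSpace ℝ (Fin n)) (B : Matrix (Fin n) (Fin m) ℝ)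
    (𝒜 : Set (Matrix (Fin n) (Fin n) ℝ))
    (C𝒜 : ℝ) (hC𝒜 : ∀ A ∈ 𝒜, opN A ≤ C𝒜)
    (Q Qf : Matrix (Fin n) (Fin n) ℝ)
    (ubar : ℝ → EuclideanSpace ℝ (Fin m))
    (xbar : Matrix (Fin n) (Fin n) ℝ → ℝ → EuclideanSpace ℝ (Fin n))
    (hadm : Adm B 𝒜 s T x₀ ubar xbar)
    (p : Matrix (Fin n) (Fin n) ℝ → ℝ → EuclideanSpace ℝ (Fin n))
    (hp : ∀ A ∈ 𝒜, IsAdjoint Q Qf s T A (xbar A) (p A)) :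
    -- the map `A ↦ p_A(·)` is continuous from `(𝒜, ‖·‖₂)` to `(C([s,T];ℝⁿ), ‖·‖_∞)`
    ∀ A ∈ 𝒜, ∀ ε > 0, ∃ δ > 0, ∀ A' ∈ 𝒜, opN (A - A') < δ →
      ∀ t ∈ Set.Icc s T, ‖p A t - p A' t‖ < ε := by
  obtain ⟨K, hK⟩ := exists_adjoint_lipschitz hC𝒜 hadm hp
  intro A hA ε hε
  refine ⟨ε / (|K| + 1), by positivity, fun A' hA' hAA' t ht => ?_⟩
  calc ‖p A t - p A' t‖ ≤ K * opN (A - A') := hK A hA A' hA' t ht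
    _ ≤ |K| * (ε / (|K| + 1)) :=
        mul_le_mul (le_abs_self K) hAA'.le (opN_nonneg _) (abs_nonneg K)
    _ < ε := by
        rw [mul_div_assoc', div_lt_iff₀ (by positivity)]
        linarith

theorem stmt_7 {n m : ℕ} (T : ℝ) (hT : 0 < T) (s : ℝ) (hs : s ∈ Set.Icc 0 T)
    (x₀ : EuclideanSpace ℝ (Fin n)) (B : Matrix (Fin n) (Fin m) ℝ)
    (𝒜 : Set (Matrix (Fin n) (Fin n) ℝ)) (h𝒜 : IsCompact 𝒜)
    (C𝒜 : ℝ) (hC𝒜 : ∀ A ∈ 𝒜, opN A ≤ C𝒜)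
    (Q Qf : Matrix (Fin n) (Fin n) ℝ) (R : Matrix (Fin m) (Fin m) ℝ)
    (hQ : Q.PosSemidef) (hQf : Qf.PosSemidef) (hR : R.PosDef)
    (π : Measure (Matrix (Fin n) (Fin n) ℝ)) [IsProbabilityMeasure π] (hπ : π 𝒜ᶜ = 0)
    (ubar : ℝ → EuclideanSpace ℝ (Fin m))
    (xbar : Matrix (Fin n) (Fin n) ℝ → ℝ → EuclideanSpace ℝ (Fin n))
    (hadm : Adm B 𝒜 s T x₀ ubar xbar)
    (hopt : ∀ u x, Adm B 𝒜 s T x₀ u x →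
      Jcost Q Qf R s T π ubar xbar ≤ Jcost Q Qf R s T π u x)
    (p : Matrix (Fin n) (Fin n) ℝ → ℝ → EuclideanSpace ℝ (Fin n))
    (hp : ∀ A ∈ 𝒜, IsAdjoint Q Qf s T A (xbar A) (p A)) :
    -- the map `A ↦ p_A(·)` is continuous from `(𝒜, ‖·‖₂)` to `(C([s,T];ℝⁿ), ‖·‖_∞)`
    ∀ A ∈ 𝒜, ∀ ε > 0, ∃ δ > 0, ∀ A' ∈ 𝒜, opN (A - A') < δ →
      ∀ t ∈ Set.Icc s T, ‖p A t - p A' t‖ < ε :=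
  stmt_7_general T s x₀ B 𝒜 C𝒜 hC𝒜 Q Qf ubar xbar hadm p hp
end

section
/- Under assumption (SH), let 𝒜 = {A₁,…,A_M} be a finite set of n×n matrices and let π^N = Σ_{i=1}^M α_i^N δ_{A_i} be probability measures with α_i^N ≥ 0, Σ_i α_i^N = 1, and suppose α_1^N → 1 and α_i^N → 0 for i = 2,…,M as N → ∞. Let Ã, B̃ be the block-diagonal augmented matrices à = diag(A₁,…,A_M) ∈ ℝ^{nM×nM}, B̃ = (B;…;B) ∈ ℝ^{nM×m}, and let Q̃^N := diag(α_1^N Q,…,α_M^N Q), Q̃_f^N := diag(α_1^N Q_f,…,α_M^N Q_f). Let P̃^N : [s,T] → ℝ^{nM×nM} solve the Riccati equation −Ṗ(t) = Ãᵀ P(t) + P(t) Ã − P(t) B̃ R^{-1} B̃ᵀ P(t) + Q̃^N with P(T) = Q̃_f^N. Then P̃^N converges, uniformly on [s,T], to the block matrix P̄(t) whose top-left n×n block is P(t) and whose other blocks are zero, where P : [s,T] → ℝ^{n×n} is the solution of the Riccati equation −Ṗ(t) = A₁ᵀ P(t) + P(t) A₁ − P(t) B R^{-1} Bᵀ P(t)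 + Q with P(T) = Q_f. -/
/-!
`diag(P, 0, …, 0)` solves the augmented Riccati equation with weights `e₁ = (1, 0, …, 0)`: every
term of the Riccati vector field maps matrices supported on the first diagonal block to matrices
of the same form. The equations for the weights `αᴺ` differ from it only through the additive
forcing `Q̃ᴺ` and the terminal value `Q̃_fᴺ`, which tend to their values at `e₁`. Solutions of a
terminal-value problem with a locally Lipschitz vector field depend continuously on such data,
uniformly in time: Grönwall's inequality, run backwards from `T`, bounds the distance between the
two solutions while it stays below `1` (where the field is Lipschitz), and a continuity argument
shows that, once the data are close enough, it never reaches `1`.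
-/

open MeasureTheory Set Matrix Filter Topology

attribute [local instance] Matrix.normedAddCommGroup Matrix.normedSpace

/-- The augmented block-diagonal state matrix `Ã = diag(A₁, …, A_M)`. -/
def augA {n M : ℕ} (A : Fin M → Matrix (Fin n) (Fin n) ℝ) :
    Matrix (Fin n × Fin M) (Fin n × Fin M) ℝ :=
  Matrix.blockDiagonal A

/-- The augmented control matrix `B̃ = (B; …; B)`. -/
def augB {n m M : ℕ} (B : Matrix (Fin n) (Fin m) ℝ) :
    Matrix (Fin n × Fin M) (Fin m) ℝ :=
  Matrix.of fun p j => B p.1 j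

/-- The augmented block-diagonal cost matrix `diag(α₁ Q, …, α_M Q)`. -/
def augQ {n M : ℕ} (α : Fin M → ℝ) (Q : Matrix (Fin n) (Fin n) ℝ) :
    Matrix (Fin n × Fin M) (Fin n × Fin M) ℝ :=
  Matrix.blockDiagonal (fun i => α i • Q)

open Metric
open scoped NNReal

theorem ContinuousOn.forall_norm_le_of_bootstrap {E : Type*} [NormedAddCommGroup E]
    {g : ℝ → E} {a b ρ r : ℝ} (hg : ContinuousOn g (Icc a b)) (hρ : ρ < r)
    (hboot : ∀ t ∈ Icc a b, (∀ u ∈ Ico a t, ‖g u‖ ≤ r) → ‖g t‖ ≤ ρ) :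
    ∀ t ∈ Icc a b, ‖g t‖ ≤ ρ := by
  suffices hlt : ∀ t ∈ Icc a b, ‖g t‖ < r from
    fun t ht => hboot t ht fun u hu => (hlt u ⟨hu.1, hu.2.le.trans ht.2⟩).le
  by_contra! hbad
  have hclosed : IsClosed (Icc a b ∩ (‖g ·‖) ⁻¹' Ici r) :=
    hg.norm.preimage_isClosed_of_isClosed isClosed_Icc isClosed_Ici
  obtain ⟨t, ⟨ht, ht1⟩, hmin⟩ :=
    (isCompact_Icc.of_isClosed_subset hclosed inter_subset_left).exists_isLeast hbad
  have hbefore : ∀ u ∈ Ico a t, ‖g u‖ ≤ r := fun u hu => by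
    by_contra! hu1
    exact hu.2.not_ge (hmin ⟨⟨hu.1, hu.2.le.trans ht.2⟩, hu1.le⟩)
  exact ((hboot t ht hbefore).trans_lt hρ).not_ge ht1

theorem tendsto_gronwallBound_of_tendsto_zero {ι : Type*} {l : Filter ι} {δ ε : ι → ℝ}
    (hδ : Tendsto δ l (𝓝 0)) (hε : Tendsto ε l (𝓝 0)) (K x : ℝ) :
    Tendsto (fun i => gronwallBound (δ i) K (ε i) x) l (𝓝 0) := by
  have hcont : Continuous fun p : ℝ × ℝ => gronwallBound p.1 K p.2 x := by
    unfold gronwallBound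
    split_ifs <;> fun_prop
  simpa [Function.comp_def, gronwallBound_ε0_δ0] using
    (hcont.tendsto (0, 0)).comp (hδ.prodMk_nhds hε)

section TerminalValueProblem

variable {E : Type*} [NormedAddCommGroup E] [NormedSpace ℝ E]

theorem norm_sub_le_gronwallBound_of_terminal {F : E → E} {S : Set E} {K : ℝ≥0}
    (hF : LipschitzOnWith K F S) {x y : ℝ → E} {p q : E} {s T : ℝ}
    (hx : ∀ t ∈ Icc s T, HasDerivAt x (F (x t) + p) t)
    (hy : ∀ t ∈ Icc s T, HasDerivAt y (F (y t) + q) t)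
    (hyS : ∀ t ∈ Icc s T, closedBall (y t) 1 ⊆ S)
    (hρ : gronwallBound ‖x T - y T‖ K ‖p - q‖ (T - s) < 1) :
    ∀ t ∈ Icc s T, ‖x t - y t‖ ≤ gronwallBound ‖x T - y T‖ K ‖p - q‖ (T - s) := by
  have hrev : ∀ u ∈ Icc 0 (T - s), T - u ∈ Icc s T := fun u hu =>
    ⟨by linarith [hu.2], by linarith [hu.1]⟩
  -- run time backwards from `T`, so that the terminal condition becomes an initial one
  set d : ℝ → E := fun u => x (T - u) - y (T - u)
  have hd : ∀ u ∈ Icc 0 (T - s),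
      HasDerivAt d (-((F (x (T - u)) - F (y (T - u))) + (p - q))) u := fun u hu =>
    (((hx _ (hrev u hu)).comp_const_sub T u).sub
      ((hy _ (hrev u hu)).comp_const_sub T u)).congr_deriv (by abel)
  have hdcont : ContinuousOn d (Icc 0 (T - s)) := fun u hu =>
    (hd u hu).continuousAt.continuousWithinAt
  have hbound := hdcont.forall_norm_le_of_bootstrap hρ fun t ht hsmall => by
    have hderiv : ∀ u ∈ Ico 0 t,
        ‖-((F (x (T - u)) - F (y (T - u))) + (p - q))‖ ≤ K * ‖d u‖ + ‖p - q‖ := fun u hu => by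
      have hu' := hrev u ⟨hu.1, hu.2.le.trans ht.2⟩
      have hyu : y (T - u) ∈ S := hyS _ hu' (mem_closedBall_self zero_le_one)
      have hxu : x (T - u) ∈ S := hyS _ hu' (mem_closedBall_iff_norm.2 (hsmall u hu))
      rw [norm_neg]
      exact (norm_add_le _ _).trans (by gcongr; exact hF.norm_sub_le hxu hyu)
    have hgron := norm_le_gronwallBound_of_norm_deriv_right_le
      (hdcont.mono (Icc_subset_Icc_right ht.2))
      (fun u hu => (hd u ⟨hu.1, hu.2.le.trans ht.2⟩).hasDerivWithinAt)
      (by simp [d] : ‖d 0‖ ≤ ‖x T - y T‖) hderiv t ⟨ht.1, le_rfl⟩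
    rw [sub_zero] at hgron
    exact hgron.trans (gronwallBound_mono (norm_nonneg _) (norm_nonneg _) K.2 ht.2)
  intro t ht
  simpa [d] using hbound (T - t) ⟨by linarith [ht.2], by linarith [ht.1]⟩

theorem tendstoUniformlyOn_of_tendsto_terminal [ProperSpace E] {F : E → E}
    (hF : LocallyLipschitz F) {ι : Type*} {l : Filter ι} {x : ι → ℝ → E} {p : ι → E}
    {y : ℝ → E} {q : E} {s T : ℝ}
    (hx : ∀ i, ∀ t ∈ Icc s T, HasDerivAt (x i) (F (x i t) + p i) t)
    (hy : ∀ t ∈ Icc s T, HasDerivAt y (F (y t) + q) t)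
    (hp : Tendsto p l (𝓝 q)) (hxT : Tendsto (fun i => x i T) l (𝓝 (y T))) :
    TendstoUniformlyOn x y l (Icc s T) := by
  obtain ⟨C, hC⟩ := isCompact_Icc.exists_bound_of_continuousOn fun t ht =>
    (hy t ht).continuousAt.continuousWithinAt
  obtain ⟨K, hK⟩ := LocallyLipschitzOn.exists_lipschitzOnWith_of_compact
    (isCompact_closedBall 0 (C + 1)) hF.locallyLipschitzOn
  have hyS : ∀ t ∈ Icc s T, closedBall (y t) 1 ⊆ closedBall 0 (C + 1) := fun t ht =>
    closedBall_subset_closedBall' (by simpa [add_comm] using hC t ht)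
  have hρ : Tendsto (fun i => gronwallBound ‖x i T - y T‖ K ‖p i - q‖ (T - s)) l (𝓝 0) :=
    tendsto_gronwallBound_of_tendsto_zero (tendsto_iff_norm_sub_tendsto_zero.1 hxT)
      (tendsto_iff_norm_sub_tendsto_zero.1 hp) _ _
  refine Metric.tendstoUniformlyOn_iff.2 fun ε hε => ?_
  filter_upwards [hρ.eventually_lt_const (lt_min hε one_pos)] with i hi t ht
  rw [dist_comm, dist_eq_norm]
  exact (norm_sub_le_gronwallBound_of_terminal hK (hx i) hy hyS
    (hi.trans_le (min_le_right _ _)) t ht).trans_lt (hi.trans_le (min_le_left _ _))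

end TerminalValueProblem

section Riccati

variable {I J : Type*} [Fintype I] [Fintype J]

def riccatiField (A : Matrix I I ℝ) (B : Matrix I J ℝ) (W : Matrix J J ℝ) (X : Matrix I I ℝ) :
    Matrix I I ℝ :=
  -(Aᵀ * X + X * A - X * B * W * Bᵀ * X)

theorem contDiff_riccatiField (A : Matrix I I ℝ) (B : Matrix I J ℝ) (W : Matrix J J ℝ) :
    ContDiff ℝ 1 (riccatiField A B W) := by
  refine contDiff_pi.2 fun i => contDiff_pi.2 fun j => ?_
  simp only [riccatiField, Matrix.neg_apply, Matrix.add_apply, Matrix.sub_apply, mul_apply,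
    transpose_apply]
  fun_prop

theorem HasDerivAt.blockDiagonal_single {o : Type*} [Fintype o] [DecidableEq o]
    {P : ℝ → Matrix I J ℝ} {P' : Matrix I J ℝ} {t : ℝ} (hP : HasDerivAt P P' t) (i : o) :
    HasDerivAt (fun t => blockDiagonal (Pi.single i (P t))) (blockDiagonal (Pi.single i P')) t :=
  let L : Matrix I J ℝ →ₗ[ℝ] Matrix (I × o) (J × o) ℝ :=
    { toFun := fun X => blockDiagonal (Pi.single i X)
      map_add' := fun X Y => by rw [Pi.single_add, blockDiagonal_add]
      map_smul' := fun c X => by rw [Pi.single_smul', blockDiagonal_smul, RingHom.id_apply] }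
  L.toContinuousLinearMap.hasFDerivAt.comp_hasDerivAt t hP

end Riccati

section Augmented

variable {n m M : ℕ}

theorem augA_transpose_mul_blockDiagonal_single (A : Fin M → Matrix (Fin n) (Fin n) ℝ) (i : Fin M)
    (X : Matrix (Fin n) (Fin n) ℝ) :
    (augA A)ᵀ * blockDiagonal (Pi.single i X) = blockDiagonal (Pi.single i ((A i)ᵀ * X)) := by
  rw [augA, blockDiagonal_transpose, ← blockDiagonal_mul]
  congr 1
  ext1 j
  rcases eq_or_ne j i with rfl | h <;> simp [*]

theorem blockDiagonal_single_mul_augA (A : Fin M → Matrix (Fin n) (Fin n) ℝ) (i : Fin M)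
    (X : Matrix (Fin n) (Fin n) ℝ) :
    blockDiagonal (Pi.single i X) * augA A = blockDiagonal (Pi.single i (X * A i)) := by
  rw [augA, ← blockDiagonal_mul]
  congr 1
  ext1 j
  rcases eq_or_ne j i with rfl | h <;> simp [*]

theorem blockDiagonal_single_mul_augB_mul (B : Matrix (Fin n) (Fin m) ℝ)
    (W : Matrix (Fin m) (Fin m) ℝ) (i : Fin M) (X Y : Matrix (Fin n) (Fin n) ℝ) :
    blockDiagonal (Pi.single i X) * augB (M := M) B * W * (augB B)ᵀ *
        blockDiagonal (Pi.single i Y) =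
      blockDiagonal (Pi.single i (X * B * W * Bᵀ * Y)) := by
  ext ⟨p, j⟩ ⟨q, k⟩
  simp only [mul_apply, blockDiagonal_apply, augB, of_apply, transpose_apply,
    Fintype.sum_prod_type, Pi.single_apply]
  by_cases hj : j = i <;> by_cases hk : k = i <;> subst_vars <;>
    simp [*, Ne.symm, ite_mul, mul_ite, mul_apply]

theorem augQ_single (i : Fin M) (Q : Matrix (Fin n) (Fin n) ℝ) :
    augQ (Pi.single i 1) Q = blockDiagonal (Pi.single i Q) := by
  rw [augQ]
  congr 1
  ext1 j
  rcases eq_or_ne j i with rfl | h <;> simp [*]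

theorem riccatiField_augA_blockDiagonal_single (A : Fin M → Matrix (Fin n) (Fin n) ℝ)
    (B : Matrix (Fin n) (Fin m) ℝ) (W : Matrix (Fin m) (Fin m) ℝ) (i : Fin M)
    (X : Matrix (Fin n) (Fin n) ℝ) :
    riccatiField (augA A) (augB B) W (blockDiagonal (Pi.single i X)) =
      blockDiagonal (Pi.single i (riccatiField (A i) B W X)) := by
  rw [riccatiField, riccatiField, augA_transpose_mul_blockDiagonal_single,
    blockDiagonal_single_mul_augA, blockDiagonal_single_mul_augB_mul]
  simp only [← Pi.single_add, ← Pi.single_sub, ← Pi.single_neg, ← blockDiagonal_add,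
    ← blockDiagonal_sub, ← blockDiagonal_neg]

theorem HasDerivAt.blockDiagonal_single_riccati {A : Fin M → Matrix (Fin n) (Fin n) ℝ}
    {B : Matrix (Fin n) (Fin m) ℝ} {W : Matrix (Fin m) (Fin m) ℝ} {Q : Matrix (Fin n) (Fin n) ℝ}
    {i : Fin M} {P : ℝ → Matrix (Fin n) (Fin n) ℝ} {t : ℝ}
    (hP : HasDerivAt P (riccatiField (A i) B W (P t) + -Q) t) :
    HasDerivAt (fun t => blockDiagonal (Pi.single i (P t)))
      (riccatiField (augA A) (augB B) W (blockDiagonal (Pi.single i (P t)))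
        + -augQ (Pi.single i 1) Q) t := by
  convert hP.blockDiagonal_single i using 1
  rw [riccatiField_augA_blockDiagonal_single, augQ_single]
  simp only [Pi.single_add, Pi.single_neg, blockDiagonal_add, blockDiagonal_neg]

theorem continuous_augQ (Q : Matrix (Fin n) (Fin n) ℝ) :
    Continuous fun α : Fin M → ℝ => augQ α Q :=
  Continuous.matrix_blockDiagonal (by fun_prop)

end Augmented

theorem stmt_16_general {n m M : ℕ} (hM : 0 < M) (T : ℝ) (s : ℝ)
    (B : Matrix (Fin n) (Fin m) ℝ)
    (Q Qf : Matrix (Fin n) (Fin n) ℝ) (R : Matrix (Fin m) (Fin m) ℝ)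
    (A : Fin M → Matrix (Fin n) (Fin n) ℝ)
    (α : ℕ → Fin M → ℝ)
    -- `α₁ᴺ → 1` and `αᵢᴺ → 0` for `i = 2, …, M`
    (hconv1 : Tendsto (fun N => α N ⟨0, hM⟩) atTop (𝓝 1))
    (hconv0 : ∀ i : Fin M, i ≠ ⟨0, hM⟩ → Tendsto (fun N => α N i) atTop (𝓝 0))
    -- the solutions of the augmented Riccati equations
    (PN : ℕ → ℝ → Matrix (Fin n × Fin M) (Fin n × Fin M) ℝ)
    (hPN : ∀ N, ∀ t ∈ Set.Icc s T,
      HasDerivAt (PN N)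
        (-((augA A)ᵀ * PN N t + PN N t * augA A
            - PN N t * augB B (M := M) * R⁻¹ * (augB B (M := M))ᵀ * PN N t + augQ (α N) Q)) t)
    (hPNT : ∀ N, PN N T = augQ (α N) Qf)
    -- the solution of the `n`-dimensional Riccati equation for `A₁`
    (P : ℝ → Matrix (Fin n) (Fin n) ℝ)
    (hP : ∀ t ∈ Set.Icc s T,
      HasDerivAt P (-((A ⟨0, hM⟩)ᵀ * P t + P t * A ⟨0, hM⟩
            - P t * B * R⁻¹ * Bᵀ * P t + Q)) t)
    (hPT : P T = Qf) :
    -- `P̃ᴺ` converges uniformly on `[s,T]` to the block matrix with top-left block `P`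
    TendstoUniformlyOn (fun N t => PN N t)
      (fun t => Matrix.blockDiagonal (fun i => if i = (⟨0, hM⟩ : Fin M) then P t else 0))
      atTop (Set.Icc s T) := by
  set i₀ : Fin M := ⟨0, hM⟩
  have hα : Tendsto α atTop (𝓝 (Pi.single i₀ 1)) := tendsto_pi_nhds.2 fun i => by
    rcases eq_or_ne i i₀ with rfl | hi
    · simpa using hconv1
    · simpa [hi] using hconv0 i hi
  have hlim : (fun t => blockDiagonal fun i => if i = i₀ then P t else 0) =
      fun t => blockDiagonal (Pi.single i₀ (P t)) :=
    funext fun t => congrArg blockDiagonal (funext fun i => (Pi.single_apply i₀ (P t) i).symm)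
  rw [hlim]
  refine tendstoUniformlyOn_of_tendsto_terminal (contDiff_riccatiField _ _ _).locallyLipschitz
    (p := fun N => -augQ (α N) Q)
    (fun N t ht => (hPN N t ht).congr_deriv (neg_add _ _))
    (fun t ht => ((hP t ht).congr_deriv (neg_add _ _)).blockDiagonal_single_riccati)
    (((continuous_augQ Q).tendsto _).comp hα).neg ?_
  rw [hPT, ← augQ_single]
  simp only [hPNT]
  exact ((continuous_augQ Qf).tendsto _).comp hα

theorem stmt_16 {n m M : ℕ} (hM : 0 < M) (T : ℝ) (hT : 0 < T) (s : ℝ) (hs : s ∈ Set.Icc 0 T)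
    (B : Matrix (Fin n) (Fin m) ℝ)
    (Q Qf : Matrix (Fin n) (Fin n) ℝ) (R : Matrix (Fin m) (Fin m) ℝ)
    (hQ : Q.PosSemidef) (hQf : Qf.PosSemidef) (hR : R.PosDef)
    (A : Fin M → Matrix (Fin n) (Fin n) ℝ)
    (α : ℕ → Fin M → ℝ) (hα0 : ∀ N i, 0 ≤ α N i) (hα1 : ∀ N, ∑ i, α N i = 1)
    -- `α₁ᴺ → 1` and `αᵢᴺ → 0` for `i = 2, …, M`
    (hconv1 : Tendsto (fun N => α N ⟨0, hM⟩) atTop (𝓝 1))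
    (hconv0 : ∀ i : Fin M, i ≠ ⟨0, hM⟩ → Tendsto (fun N => α N i) atTop (𝓝 0))
    -- the solutions of the augmented Riccati equations
    (PN : ℕ → ℝ → Matrix (Fin n × Fin M) (Fin n × Fin M) ℝ)
    (hPN : ∀ N, ∀ t ∈ Set.Icc s T,
      HasDerivAt (PN N)
        (-((augA A)ᵀ * PN N t + PN N t * augA A
            - PN N t * augB B (M := M) * R⁻¹ * (augB B (M := M))ᵀ * PN N t + augQ (α N) Q)) t)
    (hPNT : ∀ N, PN N T = augQ (α N) Qf)
    -- the solution of the `n`-dimensional Riccati equation for `A₁`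
    (P : ℝ → Matrix (Fin n) (Fin n) ℝ)
    (hP : ∀ t ∈ Set.Icc s T,
      HasDerivAt P (-((A ⟨0, hM⟩)ᵀ * P t + P t * A ⟨0, hM⟩
            - P t * B * R⁻¹ * Bᵀ * P t + Q)) t)
    (hPT : P T = Qf) :
    -- `P̃ᴺ` converges uniformly on `[s,T]` to the block matrix with top-left block `P`
    TendstoUniformlyOn (fun N t => PN N t)
      (fun t => Matrix.blockDiagonal (fun i => if i = (⟨0, hM⟩ : Fin M) then P t else 0))
      atTop (Set.Icc s T) :=
  stmt_16_general hM T s B Q Qf R A α hconv1 hconv0 PN hPN hPNT P hP hPT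
end
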